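/- Let μ be a nonnegative measure on (0,∞) with ∫_0^∞ min(1,t) μ(dt) < ∞, κ(x) = μ((x,∞)), and φ(λ) = ∫_0^∞ (1 − e^{−λt}) μ(dt). Then κ ∈ I_o(−1,0) if and only if φ ∈ I_o(0,1), and in that case φ(λ) ≃ κ(λ^{−1}) for all λ > 0. -/

import Mathlib

open Real MeasureTheory Set Filter ENNReal

/-- `s_φ(λ) = sup_{t>0} φ(λt)/φ(t)`, valued in `[0,∞]`. -/
noncomputable def sPhi (φ : ℝ → ℝ) (l : ℝ) : ℝ≥0∞ :=
  ⨆ t ∈ Set.Ioi (0:ℝ), ENNReal.ofReal (φ (l * t) / φ t)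

/-- `φ ∈ I(a,b)`: `s_φ(λ) = O(λ^a)` as `λ → 0` and `s_φ(λ) = O(λ^b)` as `λ → ∞`. -/
def memI (φ : ℝ → ℝ) (a b : ℝ) : Prop :=
  (∃ C > (0:ℝ), ∃ δ > (0:ℝ), ∀ l : ℝ, 0 < l → l < δ →
    sPhi φ l ≤ ENNReal.ofReal (C * l ^ a)) ∧
  (∃ C > (0:ℝ), ∃ M : ℝ, ∀ l : ℝ, M < l →
    sPhi φ l ≤ ENNReal.ofReal (C * l ^ b))

/-- `φ ∈ I_o(a,b)`: `s_φ(λ) = o(λ^a)` as `λ → 0` and `s_φ(λ) = o(λ^b)` as `λ → ∞`. -/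
def memIo (φ : ℝ → ℝ) (a b : ℝ) : Prop :=
  (∀ ε > (0:ℝ), ∃ δ > (0:ℝ), ∀ l : ℝ, 0 < l → l < δ →
    sPhi φ l ≤ ENNReal.ofReal (ε * l ^ a)) ∧
  (∀ ε > (0:ℝ), ∃ M : ℝ, ∀ l : ℝ, M < l →
    sPhi φ l ≤ ENNReal.ofReal (ε * l ^ b))

/-!
Write `G(x) = ∫ min(t, x) μ(dt)`, which is `∫_0^x κ`. Since `1 - e^{-u} ≍ min(u, 1)`, we have
`φ(λ) ≍ λ G(1/λ)`, and always `G(x) ≥ x κ(x)`. Each of the two regularity conditions forces the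
reverse bound `G(x) ≲ x κ(x)`:
* if `κ(δx) ≤ κ(x) / (2δ)` for a small `δ`, the shells `(δ^{n+1} x, δ^n x]` contribute geometrically
  decreasing amounts to `∫_{(0,x]} t μ(dt)`, so this integral is at most `x κ(x) / δ`;
* if `φ(Bλ) ≤ B φ(λ) / (2e)` for a large `B`, then `G(Bx) ≥ 2 G(x)`, while
  `G(Bx) - G(x) ≤ (B - 1) x κ(x)`.
In both cases `φ(λ) ≍ κ(1/λ)`, so `s_φ(λ) ≲ s_κ(1/λ)` and `s_κ(λ) ≲ s_φ(1/λ)`, which exchanges the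
two `o`-conditions.
-/

lemma one_sub_exp_neg_le_min (u : ℝ) : 1 - exp (-u) ≤ min u 1 :=
  le_min (by linarith [one_sub_le_exp_neg u]) (by linarith [exp_nonneg (-u)])

lemma exp_neg_one_mul_min_le_one_sub_exp_neg {u : ℝ} (hu : 0 ≤ u) :
    exp (-1) * min u 1 ≤ 1 - exp (-u) := by
  rcases le_total u 1 with hu1 | hu1
  · -- `1 - e^{-u} ≥ u e^{-u} ≥ u e^{-1}` on `[0, 1]`
    have h1 : exp (-u) * (u + 1) ≤ 1 := by
      calc exp (-u) * (u + 1) ≤ exp (-u) * exp u := by gcongr; exact add_one_le_exp u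
        _ = 1 := by rw [← exp_add, neg_add_cancel, exp_zero]
    have h2 : exp (-1) ≤ exp (-u) := exp_le_exp.2 (by linarith)
    rw [min_eq_left hu1]
    nlinarith
  · have h1 : exp (-u) ≤ exp (-1) := exp_le_exp.2 (by linarith)
    have h2 : exp (-1) * exp 1 = 1 := by rw [← exp_add, neg_add_cancel, exp_zero]
    have h3 : 1 + 1 ≤ exp 1 := add_one_le_exp 1
    rw [min_eq_right hu1]
    nlinarith [exp_pos (-1)]

lemma ofReal_div_le_sPhi (φ : ℝ → ℝ) (l : ℝ) {t : ℝ} (ht : 0 < t) :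
    ENNReal.ofReal (φ (l * t) / φ t) ≤ sPhi φ l :=
  le_iSup₂ (f := fun t (_ : t ∈ Ioi (0:ℝ)) => ENNReal.ofReal (φ (l * t) / φ t)) t ht

lemma le_mul_of_sPhi_le {φ : ℝ → ℝ} {l c t : ℝ} (hc : 0 ≤ c) (ht : 0 < t) (hφt : 0 < φ t)
    (h : sPhi φ l ≤ ENNReal.ofReal c) : φ (l * t) ≤ c * φ t := by
  rw [← div_le_iff₀ hφt, ← ENNReal.ofReal_le_ofReal_iff hc]
  exact (ofReal_div_le_sPhi φ l ht).trans h

lemma sPhi_le_sq_mul_sPhi_inv {f g : ℝ → ℝ} {C l : ℝ} (hC : 0 < C)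
    (hg : ∀ x, 0 < x → 0 < g x)
    (hfg : ∀ x, 0 < x → C⁻¹ * g x⁻¹ ≤ f x ∧ f x ≤ C * g x⁻¹) (hl : 0 < l) :
    sPhi f l ≤ ENNReal.ofReal (C ^ 2) * sPhi g l⁻¹ := by
  refine iSup₂_le fun t (ht : 0 < t) => ?_
  have hgt : 0 < g t⁻¹ := hg _ (inv_pos.2 ht)
  have hratio : f (l * t) / f t ≤ C ^ 2 * (g (l⁻¹ * t⁻¹) / g t⁻¹) :=
    calc f (l * t) / f t ≤ (C * g (l⁻¹ * t⁻¹)) / (C⁻¹ * g t⁻¹) := by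
          have hglt : 0 < g (l⁻¹ * t⁻¹) := hg _ (by positivity)
          rw [← mul_inv] at hglt ⊢
          exact div_le_div₀ (by positivity) (hfg _ (mul_pos hl ht)).2 (by positivity) (hfg t ht).1
      _ = C ^ 2 * (g (l⁻¹ * t⁻¹) / g t⁻¹) := by field_simp
  calc ENNReal.ofReal (f (l * t) / f t)
      ≤ ENNReal.ofReal (C ^ 2) * ENNReal.ofReal (g (l⁻¹ * t⁻¹) / g t⁻¹) := by
        rw [← ENNReal.ofReal_mul (by positivity)]
        exact ENNReal.ofReal_le_ofReal hratio
    _ ≤ ENNReal.ofReal (C ^ 2) * sPhi g l⁻¹ := by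
        gcongr
        exact ofReal_div_le_sPhi g l⁻¹ (inv_pos.2 ht)

lemma memIo_neg_of_sPhi_le {f g : ℝ → ℝ} {a b D : ℝ} (hD : 0 < D)
    (h : ∀ l, 0 < l → sPhi f l ≤ ENNReal.ofReal D * sPhi g l⁻¹) (hg : memIo g a b) :
    memIo f (-b) (-a) := by
  have hscale : ∀ {ε l c : ℝ}, 0 < l → sPhi g l⁻¹ ≤ ENNReal.ofReal (ε / D * l⁻¹ ^ c) →
      sPhi f l ≤ ENNReal.ofReal (ε * l ^ (-c)) := fun {ε l c} hl hgl => by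
    calc sPhi f l ≤ ENNReal.ofReal D * ENNReal.ofReal (ε / D * l⁻¹ ^ c) :=
          (h l hl).trans (by gcongr)
      _ = ENNReal.ofReal (ε * l ^ (-c)) := by
        rw [← ENNReal.ofReal_mul hD.le, rpow_neg hl.le, ← inv_rpow hl.le]
        congr 1
        field_simp
  constructor
  · intro ε hε
    obtain ⟨M, hM⟩ := hg.2 (ε / D) (by positivity)
    refine ⟨(max M 1)⁻¹, by positivity, fun l hl hlδ => hscale hl (hM _ ?_)⟩
    exact (le_max_left M 1).trans_lt ((lt_inv_comm₀ hl (by positivity)).1 hlδ)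
  · intro ε hε
    obtain ⟨δ, hδ, hδg⟩ := hg.1 (ε / D) (by positivity)
    refine ⟨δ⁻¹, fun l hl => ?_⟩
    have hl0 : 0 < l := (inv_pos.2 hδ).trans hl
    exact hscale hl0 (hδg _ (inv_pos.2 hl0) (inv_lt_of_inv_lt₀ hδ hl))

lemma memIo_iff_memIo_neg_of_bounds {f g : ℝ → ℝ} {a b C : ℝ} (hC : 0 < C)
    (hg : ∀ x, 0 < x → 0 < g x)
    (hfg : ∀ x, 0 < x → C⁻¹ * g x⁻¹ ≤ f x ∧ f x ≤ C * g x⁻¹) :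
    memIo g a b ↔ memIo f (-b) (-a) := by
  have hf : ∀ x, 0 < x → 0 < f x := fun x hx =>
    (mul_pos (inv_pos.2 hC) (hg _ (inv_pos.2 hx))).trans_le (hfg x hx).1
  have hgf : ∀ x, 0 < x → C⁻¹ * f x⁻¹ ≤ g x ∧ g x ≤ C * f x⁻¹ := fun x hx => by
    obtain ⟨hlo, hhi⟩ := hfg x⁻¹ (inv_pos.2 hx)
    rw [inv_inv] at hlo hhi
    exact ⟨(inv_mul_le_iff₀ hC).2 hhi, (inv_mul_le_iff₀ hC).1 hlo⟩
  refine ⟨memIo_neg_of_sPhi_le (by positivity) fun l hl => sPhi_le_sq_mul_sPhi_inv hC hg hfg hl,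
    fun hfm => ?_⟩
  simpa only [neg_neg] using
    memIo_neg_of_sPhi_le (by positivity) (fun l hl => sPhi_le_sq_mul_sPhi_inv hC hf hgf hl) hfm

lemma Ioc_subset_iUnion_Ioc_pow_mul {δ x : ℝ} (hδ0 : 0 < δ) (hδ1 : δ < 1) (hx : 0 < x) :
    Ioc 0 x ⊆ ⋃ n : ℕ, Ioc (δ ^ (n + 1) * x) (δ ^ n * x) := by
  rintro t ⟨ht0, htx⟩
  obtain ⟨n, hlo, hhi⟩ :=
    exists_nat_pow_near_of_lt_one (div_pos ht0 hx) ((div_le_one hx).2 htx) hδ0 hδ1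
  exact mem_iUnion.2 ⟨n, (lt_div_iff₀ hx).1 hlo, (div_le_iff₀ hx).1 hhi⟩

section Measure

variable (μ : Measure ℝ)

/-- By Fubini, this is `∫_0^x μ((s, ∞)) ds`. -/
noncomputable def integratedTail (x : ℝ) : ℝ≥0∞ :=
  ∫⁻ t in Ioi 0, ENNReal.ofReal (min t x) ∂μ

noncomputable def laplaceExponent (l : ℝ) : ℝ≥0∞ :=
  ∫⁻ t in Ioi 0, ENNReal.ofReal (1 - exp (-(l * t))) ∂μ

variable {μ}

lemma integratedTail_ne_top (hμ : ∫⁻ t in Ioi 0, ENNReal.ofReal (min 1 t) ∂μ ≠ ⊤) (x : ℝ) :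
    integratedTail μ x ≠ ⊤ := by
  have hbound : ∀ t ∈ Ioi (0:ℝ),
      ENNReal.ofReal (min t x) ≤ ENNReal.ofReal (max x 1) * ENNReal.ofReal (min 1 t) := by
    intro t (ht : 0 < t)
    rw [← ENNReal.ofReal_mul (zero_le_one.trans (le_max_right x 1))]
    apply ENNReal.ofReal_le_ofReal
    rcases le_total t 1 with ht1 | ht1
    · rw [min_eq_right ht1]
      exact (min_le_left t x).trans (le_mul_of_one_le_left ht.le (le_max_right x 1))
    · rw [min_eq_left ht1, mul_one]
      exact (min_le_right t x).trans (le_max_left x 1)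
  have hle : integratedTail μ x ≤
      ENNReal.ofReal (max x 1) * ∫⁻ t in Ioi 0, ENNReal.ofReal (min 1 t) ∂μ :=
    calc integratedTail μ x
        ≤ ∫⁻ t in Ioi 0, ENNReal.ofReal (max x 1) * ENNReal.ofReal (min 1 t) ∂μ :=
          setLIntegral_mono (by fun_prop) hbound
      _ = _ := lintegral_const_mul _ (by fun_prop)
  exact ne_top_of_le_ne_top (ENNReal.mul_ne_top ENNReal.ofReal_ne_top hμ) hle

lemma ofReal_mul_measure_Ioi_le_integratedTail {x : ℝ} (hx : 0 ≤ x) :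
    ENNReal.ofReal x * μ (Ioi x) ≤ integratedTail μ x :=
  calc ENNReal.ofReal x * μ (Ioi x) = ∫⁻ t in Ioi x, ENNReal.ofReal (min t x) ∂μ := by
        rw [← setLIntegral_const]
        refine setLIntegral_congr_fun measurableSet_Ioi fun t (ht : x < t) => ?_
        rw [min_eq_right ht.le]
    _ ≤ integratedTail μ x := lintegral_mono_set (Ioi_subset_Ioi hx)

lemma measure_Ioi_ne_top (hμ : ∫⁻ t in Ioi 0, ENNReal.ofReal (min 1 t) ∂μ ≠ ⊤) {x : ℝ}
    (hx : 0 < x) : μ (Ioi x) ≠ ⊤ := by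
  have h := ne_top_of_le_ne_top (integratedTail_ne_top hμ x)
    (ofReal_mul_measure_Ioi_le_integratedTail hx.le)
  exact fun htop => h (ENNReal.mul_eq_top.2 (Or.inl ⟨(ENNReal.ofReal_pos.2 hx).ne', htop⟩))

lemma integratedTail_le_add {x y : ℝ} (hyx : y ≤ x) :
    integratedTail μ x ≤ integratedTail μ y + ENNReal.ofReal (x - y) * μ (Ioi y) := by
  have hpt : ∀ t ∈ Ioi (0:ℝ), ENNReal.ofReal (min t x) ≤
      ENNReal.ofReal (min t y) + (Ioi y).indicator (fun _ => ENNReal.ofReal (x - y)) t := by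
    intro t _
    rcases le_or_gt t y with hty | hty
    · rw [min_eq_left hty, min_eq_left (hty.trans hyx)]
      exact le_self_add
    · rw [indicator_of_mem (show t ∈ Ioi y from hty), min_eq_right hty.le]
      refine le_trans (ENNReal.ofReal_le_ofReal ?_) ENNReal.ofReal_add_le
      linarith [min_le_right t x]
  calc integratedTail μ x
      ≤ ∫⁻ t in Ioi 0, (ENNReal.ofReal (min t y) +
          (Ioi y).indicator (fun _ => ENNReal.ofReal (x - y)) t) ∂μ :=
        setLIntegral_mono ((measurable_id.min measurable_const).ennreal_ofReal.add
          (measurable_const.indicator measurableSet_Ioi)) hpt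
    _ = integratedTail μ y + ENNReal.ofReal (x - y) * μ.restrict (Ioi 0) (Ioi y) := by
        rw [lintegral_add_right _ (measurable_const.indicator measurableSet_Ioi),
          lintegral_indicator_const measurableSet_Ioi]
        rfl
    _ ≤ _ := add_le_add_right (mul_le_mul_right (Measure.restrict_apply_le _ _) _) _

lemma laplaceExponent_le {l : ℝ} (hl : 0 < l) :
    laplaceExponent μ l ≤ ENNReal.ofReal l * integratedTail μ l⁻¹ := by
  rw [integratedTail, ← lintegral_const_mul _ (by fun_prop)]
  refine setLIntegral_mono (by fun_prop) fun t _ => ?_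
  rw [← ENNReal.ofReal_mul hl.le, mul_min_of_nonneg _ _ hl.le, mul_inv_cancel₀ hl.ne']
  exact ENNReal.ofReal_le_ofReal (one_sub_exp_neg_le_min _)

lemma exp_neg_one_mul_le_laplaceExponent {l : ℝ} (hl : 0 < l) :
    ENNReal.ofReal (exp (-1)) * (ENNReal.ofReal l * integratedTail μ l⁻¹) ≤
      laplaceExponent μ l := by
  rw [integratedTail, ← lintegral_const_mul _ (by fun_prop), ← lintegral_const_mul _ (by fun_prop)]
  refine setLIntegral_mono (by fun_prop) fun t (ht : 0 < t) => ?_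
  rw [← ENNReal.ofReal_mul hl.le, ← ENNReal.ofReal_mul (exp_pos _).le,
    mul_min_of_nonneg _ _ hl.le, mul_inv_cancel₀ hl.ne']
  exact ENNReal.ofReal_le_ofReal (exp_neg_one_mul_min_le_one_sub_exp_neg (by positivity))

lemma laplaceExponent_ne_top (hμ : ∫⁻ t in Ioi 0, ENNReal.ofReal (min 1 t) ∂μ ≠ ⊤) {l : ℝ}
    (hl : 0 < l) : laplaceExponent μ l ≠ ⊤ :=
  ne_top_of_le_ne_top (ENNReal.mul_ne_top ENNReal.ofReal_ne_top (integratedTail_ne_top hμ _))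
    (laplaceExponent_le hl)

lemma exp_neg_one_mul_measure_Ioi_le_laplaceExponent {l : ℝ} (hl : 0 < l) :
    ENNReal.ofReal (exp (-1)) * μ (Ioi l⁻¹) ≤ laplaceExponent μ l :=
  calc ENNReal.ofReal (exp (-1)) * μ (Ioi l⁻¹)
      = ENNReal.ofReal (exp (-1)) * (ENNReal.ofReal l * (ENNReal.ofReal l⁻¹ * μ (Ioi l⁻¹))) := by
        rw [← mul_assoc (ENNReal.ofReal l), ← ENNReal.ofReal_mul hl.le, mul_inv_cancel₀ hl.ne',
          ENNReal.ofReal_one, one_mul]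
    _ ≤ ENNReal.ofReal (exp (-1)) * (ENNReal.ofReal l * integratedTail μ l⁻¹) := by
        gcongr
        exact ofReal_mul_measure_Ioi_le_integratedTail (inv_pos.2 hl).le
    _ ≤ laplaceExponent μ l := exp_neg_one_mul_le_laplaceExponent hl

lemma laplaceExponent_toReal_pos (hμ : ∫⁻ t in Ioi 0, ENNReal.ofReal (min 1 t) ∂μ ≠ ⊤) {l : ℝ}
    (hl : 0 < l) (hμl : μ (Ioi l⁻¹) ≠ 0) : 0 < (laplaceExponent μ l).toReal := by
  refine ENNReal.toReal_pos (ne_of_gt ?_) (laplaceExponent_ne_top hμ hl)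
  refine lt_of_lt_of_le ?_ (exp_neg_one_mul_measure_Ioi_le_laplaceExponent hl)
  exact pos_iff_ne_zero.2 (mul_ne_zero (ENNReal.ofReal_pos.2 (exp_pos _)).ne' hμl)

lemma setLIntegral_Ioc_le_of_halving {δ : ℝ} (hδ0 : 0 < δ) (hδ1 : δ < 1)
    (hhalf : ∀ x, 0 < x → ENNReal.ofReal (δ * x) * μ (Ioi (δ * x)) ≤
      2⁻¹ * (ENNReal.ofReal x * μ (Ioi x)))
    {x : ℝ} (hx : 0 < x) :
    ∫⁻ t in Ioc 0 x, ENNReal.ofReal t ∂μ ≤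
      ENNReal.ofReal δ⁻¹ * (ENNReal.ofReal x * μ (Ioi x)) := by
  set h : ℝ → ℝ≥0∞ := fun y => ENNReal.ofReal y * μ (Ioi y) with h_def
  have hiter : ∀ n : ℕ, h (δ ^ n * x) ≤ 2⁻¹ ^ n * h x := by
    intro n
    induction n with
    | zero => simp
    | succ n ih =>
      calc h (δ ^ (n + 1) * x) = h (δ * (δ ^ n * x)) := by rw [pow_succ', mul_assoc]
        _ ≤ 2⁻¹ * h (δ ^ n * x) := hhalf _ (by positivity)
        _ ≤ 2⁻¹ * (2⁻¹ ^ n * h x) := by gcongr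
        _ = 2⁻¹ ^ (n + 1) * h x := by rw [pow_succ', mul_assoc]
  have hpiece : ∀ n : ℕ, ∫⁻ t in Ioc (δ ^ (n + 1) * x) (δ ^ n * x), ENNReal.ofReal t ∂μ ≤
      2⁻¹ ^ (n + 1) * (ENNReal.ofReal δ⁻¹ * h x) := by
    intro n
    calc ∫⁻ t in Ioc (δ ^ (n + 1) * x) (δ ^ n * x), ENNReal.ofReal t ∂μ
        ≤ ∫⁻ _ in Ioc (δ ^ (n + 1) * x) (δ ^ n * x), ENNReal.ofReal (δ ^ n * x) ∂μ :=
          setLIntegral_mono measurable_const fun t ht => ENNReal.ofReal_le_ofReal ht.2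
      _ = ENNReal.ofReal (δ ^ n * x) * μ (Ioc (δ ^ (n + 1) * x) (δ ^ n * x)) :=
          setLIntegral_const _ _
      _ ≤ ENNReal.ofReal δ⁻¹ * h (δ ^ (n + 1) * x) := by
          have hδn : δ⁻¹ * (δ ^ (n + 1) * x) = δ ^ n * x := by
            rw [pow_succ', mul_assoc, inv_mul_cancel_left₀ hδ0.ne']
          rw [h_def, ← mul_assoc, ← ENNReal.ofReal_mul (by positivity), hδn]
          exact mul_le_mul_right (measure_mono Ioc_subset_Ioi_self) _
      _ ≤ ENNReal.ofReal δ⁻¹ * (2⁻¹ ^ (n + 1) * h x) := by gcongr; exact hiter (n + 1)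
      _ = 2⁻¹ ^ (n + 1) * (ENNReal.ofReal δ⁻¹ * h x) := mul_left_comm _ _ _
  calc ∫⁻ t in Ioc 0 x, ENNReal.ofReal t ∂μ
      ≤ ∫⁻ t in ⋃ n : ℕ, Ioc (δ ^ (n + 1) * x) (δ ^ n * x), ENNReal.ofReal t ∂μ :=
        lintegral_mono_set (Ioc_subset_iUnion_Ioc_pow_mul hδ0 hδ1 hx)
    _ ≤ ∑' n : ℕ, ∫⁻ t in Ioc (δ ^ (n + 1) * x) (δ ^ n * x), ENNReal.ofReal t ∂μ :=
        lintegral_iUnion_le _ _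
    _ ≤ ∑' n : ℕ, 2⁻¹ ^ (n + 1) * (ENNReal.ofReal δ⁻¹ * h x) := ENNReal.tsum_le_tsum hpiece
    _ = ENNReal.ofReal δ⁻¹ * h x := by
        rw [ENNReal.tsum_mul_right, ENNReal.tsum_geometric_add_one, ENNReal.one_sub_inv_two,
          inv_inv, ENNReal.inv_mul_cancel (by norm_num) (by norm_num), one_mul]

lemma integratedTail_le_of_halving {δ : ℝ} (hδ0 : 0 < δ) (hδ1 : δ < 1)
    (hhalf : ∀ x, 0 < x → ENNReal.ofReal (δ * x) * μ (Ioi (δ * x)) ≤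
      2⁻¹ * (ENNReal.ofReal x * μ (Ioi x)))
    {x : ℝ} (hx : 0 < x) :
    integratedTail μ x ≤ ENNReal.ofReal (δ⁻¹ + 1) * (ENNReal.ofReal x * μ (Ioi x)) :=
  calc integratedTail μ x
      = ∫⁻ t in Ioc 0 x ∪ Ioi x, ENNReal.ofReal (min t x) ∂μ := by
        rw [Ioc_union_Ioi_eq_Ioi hx.le, integratedTail]
    _ ≤ (∫⁻ t in Ioc 0 x, ENNReal.ofReal (min t x) ∂μ) +
          ∫⁻ t in Ioi x, ENNReal.ofReal (min t x) ∂μ := lintegral_union_le _ _ _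
    _ ≤ (∫⁻ t in Ioc 0 x, ENNReal.ofReal t ∂μ) + ∫⁻ _ in Ioi x, ENNReal.ofReal x ∂μ :=
        add_le_add (lintegral_mono fun t => ENNReal.ofReal_le_ofReal (min_le_left t x))
          (lintegral_mono fun t => ENNReal.ofReal_le_ofReal (min_le_right t x))
    _ ≤ ENNReal.ofReal δ⁻¹ * (ENNReal.ofReal x * μ (Ioi x)) + ENNReal.ofReal x * μ (Ioi x) := by
        rw [setLIntegral_const]
        exact add_le_add_left (setLIntegral_Ioc_le_of_halving hδ0 hδ1 hhalf hx) _
    _ = ENNReal.ofReal (δ⁻¹ + 1) * (ENNReal.ofReal x * μ (Ioi x)) := by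
        rw [ENNReal.ofReal_add (by positivity) zero_le_one, ENNReal.ofReal_one, add_mul, one_mul]

lemma integratedTail_le_of_two_mul_le {B x : ℝ} (hB : 1 ≤ B) (hx : 0 ≤ x)
    (hG : integratedTail μ x ≠ ⊤) (h2 : 2 * integratedTail μ x ≤ integratedTail μ (B * x)) :
    integratedTail μ x ≤ ENNReal.ofReal (B - 1) * (ENNReal.ofReal x * μ (Ioi x)) := by
  refine ENNReal.le_of_add_le_add_left hG ?_
  calc integratedTail μ x + integratedTail μ x = 2 * integratedTail μ x := (two_mul _).symm
    _ ≤ integratedTail μ (B * x) := h2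
    _ ≤ integratedTail μ x + ENNReal.ofReal (B * x - x) * μ (Ioi x) :=
        integratedTail_le_add (le_mul_of_one_le_left hx hB)
    _ = integratedTail μ x + ENNReal.ofReal (B - 1) * (ENNReal.ofReal x * μ (Ioi x)) := by
        rw [← mul_assoc, ← ENNReal.ofReal_mul (by linarith), sub_one_mul]

lemma two_mul_integratedTail_le {B : ℝ} (hB : 0 < B)
    (hΦ : ∀ t, 0 < t → laplaceExponent μ (B * t) ≤
      ENNReal.ofReal (exp (-1) / 2 * B) * laplaceExponent μ t)
    {x : ℝ} (hx : 0 < x) :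
    2 * integratedTail μ x ≤ integratedTail μ (B * x) := by
  have hBx : 0 < (B * x)⁻¹ := inv_pos.2 (mul_pos hB hx)
  have hlow := exp_neg_one_mul_le_laplaceExponent (μ := μ) (inv_pos.2 hx)
  have hup := laplaceExponent_le (μ := μ) hBx
  have hstep := hΦ _ hBx
  rw [inv_inv] at hlow hup
  rw [show B * (B * x)⁻¹ = x⁻¹ by field_simp] at hstep
  have ha : ENNReal.ofReal (exp (-1) * x⁻¹ / 2) ≠ 0 := (ENNReal.ofReal_pos.2 (by positivity)).ne'
  rw [← ENNReal.mul_le_mul_iff_right ha ENNReal.ofReal_ne_top]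
  calc ENNReal.ofReal (exp (-1) * x⁻¹ / 2) * (2 * integratedTail μ x)
      = ENNReal.ofReal (exp (-1)) * (ENNReal.ofReal x⁻¹ * integratedTail μ x) := by
        rw [← mul_assoc, ← mul_assoc, ← ENNReal.ofReal_ofNat 2,
          ← ENNReal.ofReal_mul (by positivity), ← ENNReal.ofReal_mul (exp_pos _).le]
        congr 2
        ring
    _ ≤ laplaceExponent μ x⁻¹ := hlow
    _ ≤ ENNReal.ofReal (exp (-1) / 2 * B) * laplaceExponent μ (B * x)⁻¹ := hstep
    _ ≤ ENNReal.ofReal (exp (-1) / 2 * B) *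
          (ENNReal.ofReal (B * x)⁻¹ * integratedTail μ (B * x)) := by gcongr
    _ = ENNReal.ofReal (exp (-1) * x⁻¹ / 2) * integratedTail μ (B * x) := by
        rw [← mul_assoc, ← ENNReal.ofReal_mul (by positivity)]
        congr 2
        field_simp

end Measure

/-- The reverse bound is `ofReal_mul_measure_Ioi_le_integratedTail`. -/
def IntegratedTailComparable (μ : Measure ℝ) : Prop :=
  ∃ A : ℝ, ∀ x, 0 < x → integratedTail μ x ≤ ENNReal.ofReal A * (ENNReal.ofReal x * μ (Ioi x))

section Comparable

variable {μ : Measure ℝ}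

lemma integratedTailComparable_of_memIo_tail (hμ : ∫⁻ t in Ioi 0, ENNReal.ofReal (min 1 t) ∂μ ≠ ⊤)
    (hpos : ∀ x, 0 < x → 0 < (μ (Ioi x)).toReal)
    (hk : memIo (fun x => (μ (Ioi x)).toReal) (-1) 0) : IntegratedTailComparable μ := by
  obtain ⟨δ₁, hδ₁, hsmall⟩ := hk.1 (1 / 2) one_half_pos
  set δ := min δ₁ 1 / 2 with hδ
  have hmin : 0 < min δ₁ 1 := lt_min hδ₁ one_pos
  have hδ0 : 0 < δ := by positivity
  have hδδ₁ : δ < δ₁ := by linarith [min_le_left δ₁ 1]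
  have hδ1 : δ < 1 := by linarith [min_le_right δ₁ 1]
  have hhalf : ∀ x, 0 < x → ENNReal.ofReal (δ * x) * μ (Ioi (δ * x)) ≤
      2⁻¹ * (ENNReal.ofReal x * μ (Ioi x)) := by
    intro x hx
    have hstep : (μ (Ioi (δ * x))).toReal ≤ 1 / 2 * δ ^ (-1 : ℝ) * (μ (Ioi x)).toReal :=
      le_mul_of_sPhi_le (by positivity) hx (hpos x hx) (hsmall δ hδ0 hδδ₁)
    rw [Real.rpow_neg_one] at hstep
    rw [← ENNReal.ofReal_toReal (measure_Ioi_ne_top hμ hx),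
      ← ENNReal.ofReal_toReal (measure_Ioi_ne_top hμ (mul_pos hδ0 hx)),
      ← ENNReal.ofReal_mul (by positivity), ← ENNReal.ofReal_mul hx.le,
      ← ENNReal.ofReal_ofNat 2, ← ENNReal.ofReal_inv_of_pos two_pos,
      ← ENNReal.ofReal_mul (by positivity)]
    refine ENNReal.ofReal_le_ofReal ?_
    calc δ * x * (μ (Ioi (δ * x))).toReal
        ≤ δ * x * (1 / 2 * δ⁻¹ * (μ (Ioi x)).toReal) := by gcongr
      _ = 2⁻¹ * (x * (μ (Ioi x)).toReal) := by field_simp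
  exact ⟨δ⁻¹ + 1, fun x hx => integratedTail_le_of_halving hδ0 hδ1 hhalf hx⟩

lemma integratedTailComparable_of_memIo_laplaceExponent
    (hμ : ∫⁻ t in Ioi 0, ENNReal.ofReal (min 1 t) ∂μ ≠ ⊤)
    (hpos : ∀ x, 0 < x → μ (Ioi x) ≠ 0)
    (hp : memIo (fun l => (laplaceExponent μ l).toReal) 0 1) : IntegratedTailComparable μ := by
  obtain ⟨M, hM⟩ := hp.2 (exp (-1) / 2) (by positivity)
  set B := max M 0 + 1
  have hB1 : 1 ≤ B := by linarith [le_max_right M 0]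
  have hMB : M < B := by linarith [le_max_left M 0]
  have hΦ : ∀ t, 0 < t → laplaceExponent μ (B * t) ≤
      ENNReal.ofReal (exp (-1) / 2 * B) * laplaceExponent μ t := by
    intro t ht
    have hstep : (laplaceExponent μ (B * t)).toReal ≤
        exp (-1) / 2 * B ^ (1 : ℝ) * (laplaceExponent μ t).toReal :=
      le_mul_of_sPhi_le (by positivity) ht
        (laplaceExponent_toReal_pos hμ ht (hpos _ (inv_pos.2 ht))) (hM B hMB)
    rw [Real.rpow_one] at hstep
    rw [← ENNReal.ofReal_toReal (laplaceExponent_ne_top hμ (by positivity)),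
      ← ENNReal.ofReal_toReal (laplaceExponent_ne_top hμ ht), ← ENNReal.ofReal_mul (by positivity)]
    exact ENNReal.ofReal_le_ofReal hstep
  exact ⟨B - 1, fun x hx => integratedTail_le_of_two_mul_le hB1 hx.le
    (integratedTail_ne_top hμ x) (two_mul_integratedTail_le (by positivity) hΦ hx)⟩

lemma IntegratedTailComparable.exists_bounds (hμ : ∫⁻ t in Ioi 0, ENNReal.ofReal (min 1 t) ∂μ ≠ ⊤)
    (h : IntegratedTailComparable μ) :
    ∃ C > (0:ℝ), ∀ l > (0:ℝ), C⁻¹ * (μ (Ioi l⁻¹)).toReal ≤ (laplaceExponent μ l).toReal ∧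
      (laplaceExponent μ l).toReal ≤ C * (μ (Ioi l⁻¹)).toReal := by
  obtain ⟨A, hA⟩ := h
  set C := max A (exp 1)
  have hC : 0 < C := (exp_pos 1).trans_le (le_max_right _ _)
  refine ⟨C, hC, fun l hl => ?_⟩
  have hup : laplaceExponent μ l ≤ ENNReal.ofReal C * μ (Ioi l⁻¹) :=
    calc laplaceExponent μ l ≤ ENNReal.ofReal l * integratedTail μ l⁻¹ := laplaceExponent_le hl
      _ ≤ ENNReal.ofReal l * (ENNReal.ofReal A * (ENNReal.ofReal l⁻¹ * μ (Ioi l⁻¹))) := by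
          gcongr; exact hA _ (inv_pos.2 hl)
      _ = ENNReal.ofReal A * μ (Ioi l⁻¹) := by
          rw [mul_left_comm, ← mul_assoc (ENNReal.ofReal l), ← ENNReal.ofReal_mul hl.le,
            mul_inv_cancel₀ hl.ne', ENNReal.ofReal_one, one_mul]
      _ ≤ ENNReal.ofReal C * μ (Ioi l⁻¹) := by gcongr; exact le_max_left _ _
  have hfin : ENNReal.ofReal C * μ (Ioi l⁻¹) ≠ ⊤ :=
    ENNReal.mul_ne_top ENNReal.ofReal_ne_top (measure_Ioi_ne_top hμ (inv_pos.2 hl))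
  constructor
  · calc C⁻¹ * (μ (Ioi l⁻¹)).toReal ≤ exp (-1) * (μ (Ioi l⁻¹)).toReal := by
          rw [exp_neg]; gcongr; exact le_max_right _ _
      _ = (ENNReal.ofReal (exp (-1)) * μ (Ioi l⁻¹)).toReal := by
          rw [ENNReal.toReal_mul, ENNReal.toReal_ofReal (exp_pos _).le]
      _ ≤ (laplaceExponent μ l).toReal :=
          ENNReal.toReal_mono (ne_top_of_le_ne_top hfin hup)
            (exp_neg_one_mul_measure_Ioi_le_laplaceExponent hl)
  · calc (laplaceExponent μ l).toReal ≤ (ENNReal.ofReal C * μ (Ioi l⁻¹)).toReal :=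
          ENNReal.toReal_mono hfin hup
      _ = C * (μ (Ioi l⁻¹)).toReal := by rw [ENNReal.toReal_mul, ENNReal.toReal_ofReal hC.le]

lemma IntegratedTailComparable.memIo_iff (hμ : ∫⁻ t in Ioi 0, ENNReal.ofReal (min 1 t) ∂μ ≠ ⊤)
    (h : IntegratedTailComparable μ)
    (hpos : ∀ x, 0 < x → 0 < (μ (Ioi x)).toReal) :
    memIo (fun x => (μ (Ioi x)).toReal) (-1) 0 ↔
      memIo (fun l => (laplaceExponent μ l).toReal) 0 1 := by
  obtain ⟨C, hC, hbounds⟩ := h.exists_bounds hμ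
  simpa only [neg_zero, neg_neg] using
    memIo_iff_memIo_neg_of_bounds (a := -1) (b := 0) hC hpos hbounds

end Comparable

theorem memIo_kernel_iff_bernstein_general (μ : Measure ℝ)
    (hμ : (∫⁻ t in Set.Ioi (0:ℝ), ENNReal.ofReal (min 1 t) ∂μ) ≠ ⊤)
    (κ φ : ℝ → ℝ)
    (hκ : ∀ x, κ x = (μ (Set.Ioi x)).toReal)
    (hφ : ∀ l, φ l =
      (∫⁻ t in Set.Ioi (0:ℝ), ENNReal.ofReal (1 - Real.exp (-(l * t))) ∂μ).toReal)
    (hκpos : ∀ x ∈ Set.Ioi (0:ℝ), 0 < κ x) :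
    (memIo κ (-1) 0 ↔ memIo φ 0 1) ∧
    (memIo κ (-1) 0 →
      ∃ C > (0:ℝ), ∀ l > (0:ℝ), C⁻¹ * κ l⁻¹ ≤ φ l ∧ φ l ≤ C * κ l⁻¹) := by
  obtain rfl : κ = fun x => (μ (Ioi x)).toReal := funext hκ
  obtain rfl : φ = fun l => (laplaceExponent μ l).toReal := funext hφ
  have hpos : ∀ x, 0 < x → μ (Ioi x) ≠ 0 := fun x hx =>
    (ENNReal.toReal_pos_iff.1 (hκpos x hx)).1.ne'
  refine ⟨⟨fun hk => ?_, fun hp => ?_⟩, fun hk => ?_⟩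
  · exact ((integratedTailComparable_of_memIo_tail hμ hκpos hk).memIo_iff hμ hκpos).1 hk
  · exact ((integratedTailComparable_of_memIo_laplaceExponent hμ hpos hp).memIo_iff hμ hκpos).2 hp
  · exact (integratedTailComparable_of_memIo_tail hμ hκpos hk).exists_bounds hμ

/-- for a nonnegative measure `μ` on `(0,∞)` with `∫ min(1,t) μ(dt) < ∞`,
setting `κ(x) = μ((x,∞))` and `φ(λ) = ∫ (1 − e^{−λt}) μ(dt)`, one has
`κ ∈ I_o(−1,0) ↔ φ ∈ I_o(0,1)`, and in that case `φ(λ) ≃ κ(λ⁻¹)` for all `λ > 0`. -/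
theorem memIo_kernel_iff_bernstein (μ : Measure ℝ) (hμ0 : μ (Set.Iic 0) = 0)
    (hμ : (∫⁻ t in Set.Ioi (0:ℝ), ENNReal.ofReal (min 1 t) ∂μ) ≠ ⊤)
    (κ φ : ℝ → ℝ)
    (hκ : ∀ x, κ x = (μ (Set.Ioi x)).toReal)
    (hφ : ∀ l, φ l =
      (∫⁻ t in Set.Ioi (0:ℝ), ENNReal.ofReal (1 - Real.exp (-(l * t))) ∂μ).toReal)
    (hκpos : ∀ x ∈ Set.Ioi (0:ℝ), 0 < κ x) :
    (memIo κ (-1) 0 ↔ memIo φ 0 1) ∧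
    (memIo κ (-1) 0 →
      ∃ C > (0:ℝ), ∀ l > (0:ℝ), C⁻¹ * κ l⁻¹ ≤ φ l ∧ φ l ≤ C * κ l⁻¹) :=
  memIo_kernel_iff_bernstein_general μ hμ κ φ hκ hφ hκpos
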